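/- Consider the three-stage explicit Runge–Kutta method with Butcher tableau a₂₁ = 1/3, a₃₁ = −5/48, a₃₂ = 15/16, c = (0, 1/3, 5/6), b = (1/10, 1/2, 2/5). For every Hamiltonian system ẏ = J∇H(y) with J constant skew-symmetric and H smooth, and every initial value y₀, the one-step approximation y₁(h) satisfies H(y₁(h)) = H(y₀) + O(h⁵) as h → 0; i.e., this method has pseudo-energy-preserving order at least 4. -/

import Mathlib

open Filter Asymptotics Topology Matrix

/-- The gradient of `H : ℝⁿ → ℝ` in coordinates: `(∇H(y))_i = ∂H/∂y_i (y)`. -/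
noncomputable def grad {n : ℕ} (H : (Fin n → ℝ) → ℝ) (y : Fin n → ℝ) : Fin n → ℝ :=
  fun i => fderiv ℝ H y (Pi.single i 1)

/-- The stages `k_i = f(y₀ + h ∑_{j<i} a_{ij} k_j)` of an explicit Runge--Kutta method. -/
noncomputable def rkStages {s n : ℕ} (A : Matrix (Fin s) (Fin s) ℝ)
    (f : (Fin n → ℝ) → (Fin n → ℝ)) (h : ℝ) (y₀ : Fin n → ℝ) :
    Fin s → Fin n → ℝ
  | i => f (fun m => y₀ m + h * ∑ j : Fin s,
      if _ : (j : ℕ) < (i : ℕ) then A i j * rkStages A f h y₀ j m else 0)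
  termination_by i => (i : ℕ)

/-- One step `y₁ = y₀ + h ∑_i b_i k_i` of an explicit Runge--Kutta method with
coefficients `(A, b)`, applied with step size `h` to `ẏ = f(y)` from `y₀`. -/
noncomputable def rkStep {s n : ℕ} (A : Matrix (Fin s) (Fin s) ℝ) (b : Fin s → ℝ)
    (f : (Fin n → ℝ) → (Fin n → ℝ)) (h : ℝ) (y₀ : Fin n → ℝ) : Fin n → ℝ :=
  fun m => y₀ m + h * ∑ i, b i * rkStages A f h y₀ i m


/-
Write `y(h)` for the one-step map and `f = J∇H`. Since `H ∘ y` is smooth, Taylor's theorem reduces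
the claim to the vanishing of the first four derivatives of `H ∘ y` at `h = 0`. Differentiating
the stage equations expresses the Taylor coefficients of `y` through the elementary differentials
`f, f'f, f''(f,f), f'f'f, f'''(f,f,f), f''(f,f'f), f'f''(f,f)` at `y₀`, and Faà di Bruno's formula
expresses the derivatives of `H ∘ y` through those of `H`. Every resulting term pairs a derivative
of `H` with a vector `J∇M`; the skew-symmetry identity `L (J∇M) = -M (J∇L)`, together with the
symmetry of the higher derivatives of `H`, makes the four combinations cancel for this tableau.
-/

open scoped ContDiff

section Taylor

variable {E : Type*} [NormedAddCommGroup E] [NormedSpace ℝ E]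

theorem sub_isBigO_pow_of_iteratedDeriv_eq_zero {f : ℝ → E} {x₀ : ℝ} {n : ℕ}
    (hf : ContDiff ℝ (n + 1) f) (hzero : ∀ k ∈ Finset.Icc 1 n, iteratedDeriv k f x₀ = 0) :
    (fun x => f x - f x₀) =O[𝓝 x₀] fun x => (x - x₀) ^ (n + 1) := by
  have htaylor : taylorWithinEval f (n + 1) Set.univ x₀ = fun x => f x₀ +
      (((n + 1).factorial : ℝ)⁻¹ * (x - x₀) ^ (n + 1)) • iteratedDeriv (n + 1) f x₀ := by
    funext x
    rw [taylor_within_apply, Finset.sum_range_succ, Finset.sum_range_succ', Finset.sum_eq_zero]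
    · simp
    intro k hk
    rw [iteratedDerivWithin_univ, hzero (k + 1) (by simpa using hk), smul_zero]
  have hrem := (taylor_isLittleO_univ (x₀ := x₀) (by exact_mod_cast hf)).isBigO
  have hpoly := ((isBigO_refl (fun x => (x - x₀) ^ (n + 1)) (𝓝 x₀)).const_mul_left
    ((n + 1).factorial : ℝ)⁻¹).smul (isBigO_const_const (iteratedDeriv (n + 1) f x₀)
      (one_ne_zero : (1 : ℝ) ≠ 0) (𝓝 x₀))
  simp only [smul_eq_mul, mul_one] at hpoly
  rw [htaylor] at hrem
  refine (hrem.add hpoly).congr_left fun x => ?_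
  dsimp only
  abel

end Taylor

section IteratedDeriv

variable {V W : Type*} [NormedAddCommGroup V] [NormedSpace ℝ V]
  [NormedAddCommGroup W] [NormedSpace ℝ W] {w : ℝ → W}

theorem hasDerivAt_iteratedDeriv (hw : ContDiff ℝ ∞ w) (k : ℕ) (t : ℝ) :
    HasDerivAt (iteratedDeriv k w) (iteratedDeriv (k + 1) w t) t := by
  rw [iteratedDeriv_succ]
  exact (hw.differentiable_iteratedDeriv k
    (by exact_mod_cast ENat.natCast_lt_top k)).differentiableAt.hasDerivAt

theorem iteratedDeriv_succ_id_smul (hw : ContDiff ℝ ∞ w) (k : ℕ) (x : ℝ) :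
    iteratedDeriv (k + 1) (fun h => h • w h) x
      = (k + 1 : ℝ) • iteratedDeriv k w x + x • iteratedDeriv (k + 1) w x := by
  induction k generalizing x with
  | zero =>
    simp only [Nat.cast_zero, zero_add, one_smul, iteratedDeriv_one, iteratedDeriv_zero]
    exact ((hasDerivAt_id' x).smul (hasDerivAt_iteratedDeriv hw 0 x)).deriv.trans
      (by rw [iteratedDeriv_one, iteratedDeriv_zero, one_smul, add_comm])
  | succ k ih =>
    rw [iteratedDeriv_succ, funext ih]
    refine (((hasDerivAt_iteratedDeriv hw k x).const_smul ((k : ℝ) + 1)).add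
      ((hasDerivAt_id x).smul (hasDerivAt_iteratedDeriv hw (k + 1) x))).deriv.trans ?_
    simp only [id, one_smul]
    push_cast
    module

theorem iteratedDeriv_succ_const_add_id_smul_zero (hw : ContDiff ℝ ∞ w) (y₀ : W) (k : ℕ) :
    iteratedDeriv (k + 1) (fun h => y₀ + h • w h) 0 = (k + 1 : ℝ) • iteratedDeriv k w 0 := by
  rw [iteratedDeriv_const_add k.succ_pos, iteratedDeriv_succ_id_smul hw, zero_smul, add_zero]

theorem ContinuousLinearMap.iteratedDeriv_comp_left (L : V →L[ℝ] W) {φ : ℝ → V}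
    (hφ : ContDiff ℝ ∞ φ) (k : ℕ) (t : ℝ) :
    iteratedDeriv k (L ∘ φ) t = L (iteratedDeriv k φ t) := by
  simp only [iteratedDeriv_eq_iteratedFDeriv,
    L.iteratedFDeriv_comp_left hφ.contDiffAt (WithTop.coe_le_coe.2 le_top)]
  rfl

end IteratedDeriv

section FaaDiBruno

variable {E G W : Type*} [NormedAddCommGroup E] [NormedSpace ℝ E]
  [NormedAddCommGroup G] [NormedSpace ℝ G] [NormedAddCommGroup W] [NormedSpace ℝ W]
  {F : E → G} {γ : ℝ → E}

theorem ContDiff.hasDerivAt_comp {Φ : E → W} (hΦ : ContDiff ℝ ∞ Φ) (hγ : ContDiff ℝ ∞ γ)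
    (t : ℝ) : HasDerivAt (fun s => Φ (γ s)) (fderiv ℝ Φ (γ t) (iteratedDeriv 1 γ t)) t := by
  rw [iteratedDeriv_one]
  exact (hΦ.differentiable (by simp) _).hasFDerivAt.comp_hasDerivAt t
    (hγ.differentiable (by simp) t).hasDerivAt

theorem ContDiff.hasDerivAt_fderiv_apply_comp {Φ : E → W} (hΦ : ContDiff ℝ ∞ Φ)
    (hγ : ContDiff ℝ ∞ γ) {u : ℝ → E} {u' : E} {t : ℝ} (hu : HasDerivAt u u' t) :
    HasDerivAt (fun s => fderiv ℝ Φ (γ s) (u s))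
      (fderiv ℝ (fderiv ℝ Φ) (γ t) (iteratedDeriv 1 γ t) (u t) + fderiv ℝ Φ (γ t) u') t :=
  ((contDiff_infty_iff_fderiv.1 hΦ).2.hasDerivAt_comp hγ t).clm_apply hu

theorem fderiv_fderiv_comm (hF : ContDiff ℝ ∞ F) (y a b : E) :
    fderiv ℝ (fderiv ℝ F) y a b = fderiv ℝ (fderiv ℝ F) y b a :=
  (hF.contDiffAt.isSymmSndFDerivAt (by simpa using ENat.LEInfty.out)) a b

theorem fderiv_fderiv_fderiv_comm₁₂ (hF : ContDiff ℝ ∞ F) (y a b c : E) :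
    fderiv ℝ (fderiv ℝ (fderiv ℝ F)) y a b c = fderiv ℝ (fderiv ℝ (fderiv ℝ F)) y b a c := by
  rw [fderiv_fderiv_comm (contDiff_infty_iff_fderiv.1 hF).2]

theorem fderiv_fderiv_fderiv_comm₂₃ (hF : ContDiff ℝ ∞ F) (y a b c : E) :
    fderiv ℝ (fderiv ℝ (fderiv ℝ F)) y a b c = fderiv ℝ (fderiv ℝ (fderiv ℝ F)) y a c b := by
  -- both sides are the derivative at `0` of `s ↦ D²F (y + s • a) b c = D²F (y + s • a) c b`
  have hline : HasDerivAt (fun s : ℝ => y + s • a) a 0 := by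
    simpa using ((hasDerivAt_id (0 : ℝ)).smul_const a).const_add y
  have hD₂ : HasFDerivAt (fderiv ℝ (fderiv ℝ F)) (fderiv ℝ (fderiv ℝ (fderiv ℝ F)) y)
      (y + (0 : ℝ) • a) := by
    rw [zero_smul, add_zero]
    exact (((contDiff_infty_iff_fderiv.1 (contDiff_infty_iff_fderiv.1 hF).2).2).differentiable
      (by simp) y).hasFDerivAt
  have hdir (b c : E) : HasDerivAt (fun s : ℝ => fderiv ℝ (fderiv ℝ F) (y + s • a) b c)
      (fderiv ℝ (fderiv ℝ (fderiv ℝ F)) y a b c) 0 := by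
    have h := ((hD₂.comp_hasDerivAt 0 hline).clm_apply (G := E →L[ℝ] G)
      (hasDerivAt_const 0 b)).clm_apply (G := G) (hasDerivAt_const 0 c)
    simp only [Function.comp_def, map_zero, add_zero] at h
    exact h
  have hcb := hdir c b
  simp_rw [fderiv_fderiv_comm hF _ c b] at hcb
  exact (hdir b c).unique hcb

theorem iteratedDeriv_one_comp (hF : ContDiff ℝ ∞ F) (hγ : ContDiff ℝ ∞ γ) (t : ℝ) :
    iteratedDeriv 1 (F ∘ γ) t = fderiv ℝ F (γ t) (iteratedDeriv 1 γ t) := by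
  rw [iteratedDeriv_one]
  exact (hF.hasDerivAt_comp hγ t).deriv

theorem iteratedDeriv_two_comp (hF : ContDiff ℝ ∞ F) (hγ : ContDiff ℝ ∞ γ) (t : ℝ) :
    iteratedDeriv 2 (F ∘ γ) t =
      fderiv ℝ (fderiv ℝ F) (γ t) (iteratedDeriv 1 γ t) (iteratedDeriv 1 γ t)
      + fderiv ℝ F (γ t) (iteratedDeriv 2 γ t) := by
  rw [iteratedDeriv_succ, funext (iteratedDeriv_one_comp hF hγ)]
  exact (hF.hasDerivAt_fderiv_apply_comp hγ (hasDerivAt_iteratedDeriv hγ 1 t)).deriv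

theorem iteratedDeriv_three_comp (hF : ContDiff ℝ ∞ F) (hγ : ContDiff ℝ ∞ γ) (t : ℝ) :
    iteratedDeriv 3 (F ∘ γ) t =
      fderiv ℝ (fderiv ℝ (fderiv ℝ F)) (γ t) (iteratedDeriv 1 γ t) (iteratedDeriv 1 γ t)
        (iteratedDeriv 1 γ t)
      + 3 • fderiv ℝ (fderiv ℝ F) (γ t) (iteratedDeriv 1 γ t) (iteratedDeriv 2 γ t)
      + fderiv ℝ F (γ t) (iteratedDeriv 3 γ t) := by
  rw [iteratedDeriv_succ, funext (iteratedDeriv_two_comp hF hγ)]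
  have h₁ := hasDerivAt_iteratedDeriv hγ 1 t
  have h₂ := hasDerivAt_iteratedDeriv hγ 2 t
  have hD₂ := ((contDiff_infty_iff_fderiv.1 hF).2.hasDerivAt_fderiv_apply_comp hγ h₁).clm_apply
    (G := G) h₁
  have hD₁ := hF.hasDerivAt_fderiv_apply_comp hγ h₂
  refine (hD₂.add hD₁).deriv.trans ?_
  simp only [_root_.add_apply, Nat.reduceAdd]
  rw [fderiv_fderiv_comm hF _ (iteratedDeriv 2 γ t)]
  abel

theorem iteratedDeriv_four_comp (hF : ContDiff ℝ ∞ F) (hγ : ContDiff ℝ ∞ γ) (t : ℝ) :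
    iteratedDeriv 4 (F ∘ γ) t =
      fderiv ℝ (fderiv ℝ (fderiv ℝ (fderiv ℝ F))) (γ t) (iteratedDeriv 1 γ t)
        (iteratedDeriv 1 γ t) (iteratedDeriv 1 γ t) (iteratedDeriv 1 γ t)
      + 6 • fderiv ℝ (fderiv ℝ (fderiv ℝ F)) (γ t) (iteratedDeriv 1 γ t) (iteratedDeriv 1 γ t)
        (iteratedDeriv 2 γ t)
      + 4 • fderiv ℝ (fderiv ℝ F) (γ t) (iteratedDeriv 1 γ t) (iteratedDeriv 3 γ t)
      + 3 • fderiv ℝ (fderiv ℝ F) (γ t) (iteratedDeriv 2 γ t) (iteratedDeriv 2 γ t)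
      + fderiv ℝ F (γ t) (iteratedDeriv 4 γ t) := by
  rw [iteratedDeriv_succ, funext (iteratedDeriv_three_comp hF hγ)]
  have hDF := (contDiff_infty_iff_fderiv.1 hF).2
  have h₁ := hasDerivAt_iteratedDeriv hγ 1 t
  have h₂ := hasDerivAt_iteratedDeriv hγ 2 t
  have h₃ := hasDerivAt_iteratedDeriv hγ 3 t
  have hD₃ := (((contDiff_infty_iff_fderiv.1 hDF).2.hasDerivAt_fderiv_apply_comp hγ h₁).clm_apply
    (G := E →L[ℝ] G) h₁).clm_apply (G := G) h₁
  have hD₂ := ((hDF.hasDerivAt_fderiv_apply_comp hγ h₁).clm_apply (G := G) h₂).const_smul 3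
  have hD₁ := hF.hasDerivAt_fderiv_apply_comp hγ h₃
  refine ((hD₃.add hD₂).add hD₁).deriv.trans ?_
  simp only [_root_.add_apply, smul_add, Nat.reduceAdd]
  rw [fderiv_fderiv_fderiv_comm₁₂ hF _ (iteratedDeriv 2 γ t),
    fderiv_fderiv_fderiv_comm₂₃ hF _ _ (iteratedDeriv 2 γ t)]
  abel

end FaaDiBruno

section Hamiltonian

variable {n : ℕ}

theorem ContinuousLinearMap.apply_eq_dotProduct (L : (Fin n → ℝ) →L[ℝ] ℝ) (v : Fin n → ℝ) :
    L v = v ⬝ᵥ fun i => L (Pi.single i 1) := by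
  have hsingle (i : Fin n) : (fun j => if i = j then (1 : ℝ) else 0) = Pi.single i 1 := by
    ext j
    simp [Pi.single_apply, eq_comm]
  simpa [dotProduct, hsingle] using L.toLinearMap.pi_apply_eq_sum_univ v

noncomputable def hamiltonianVector (J : Matrix (Fin n) (Fin n) ℝ) :
    ((Fin n → ℝ) →L[ℝ] ℝ) →L[ℝ] Fin n → ℝ :=
  (LinearMap.toContinuousLinearMap J.mulVecLin).comp
    (ContinuousLinearMap.pi fun i => ContinuousLinearMap.apply ℝ ℝ (Pi.single i 1))

theorem hamiltonianVector_apply (J : Matrix (Fin n) (Fin n) ℝ) (L : (Fin n → ℝ) →L[ℝ] ℝ) :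
    hamiltonianVector J L = J *ᵥ fun i => L (Pi.single i 1) :=
  rfl

theorem mulVec_grad (J : Matrix (Fin n) (Fin n) ℝ) (H : (Fin n → ℝ) → ℝ) (y : Fin n → ℝ) :
    J *ᵥ grad H y = hamiltonianVector J (fderiv ℝ H y) :=
  rfl

theorem apply_hamiltonianVector {J : Matrix (Fin n) (Fin n) ℝ} (hJ : Jᵀ = -J)
    (L M : (Fin n → ℝ) →L[ℝ] ℝ) : L (hamiltonianVector J M) = -M (hamiltonianVector J L) := by
  rw [L.apply_eq_dotProduct, M.apply_eq_dotProduct, hamiltonianVector_apply,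
    hamiltonianVector_apply, dotProduct_comm, dotProduct_mulVec, ← mulVec_transpose, hJ,
    neg_mulVec, neg_dotProduct]

end Hamiltonian

section Energy

variable {E : Type*} [NormedAddCommGroup E] [NormedSpace ℝ E]

-- With `f = T ∘ DH`, the vectors `F, Q, R, S, U, W, V` are the elementary differentials
-- `f, f'f, f''(f,f), f'f'f, f'''(f,f,f), f''(f,f'f), f'f''(f,f)` at `y₀`.
theorem iteratedDeriv_energy_eq_zero {T : (E →L[ℝ] ℝ) →L[ℝ] E}
    (hT : ∀ L M : E →L[ℝ] ℝ, L (T M) = -M (T L)) {H : E → ℝ} (hH : ContDiff ℝ ∞ H)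
    {y : ℝ → E} (hy : ContDiff ℝ ∞ y) {y₀ : E} (hy₀ : y 0 = y₀) {F Q R S U W V : E}
    (hF : F = T (fderiv ℝ H y₀))
    (hQ : Q = T (fderiv ℝ (fderiv ℝ H) y₀ F))
    (hR : R = T (fderiv ℝ (fderiv ℝ (fderiv ℝ H)) y₀ F F))
    (hS : S = T (fderiv ℝ (fderiv ℝ H) y₀ Q))
    (hU : U = T (fderiv ℝ (fderiv ℝ (fderiv ℝ (fderiv ℝ H))) y₀ F F F))
    (hW : W = T (fderiv ℝ (fderiv ℝ (fderiv ℝ H)) y₀ F Q))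
    (hV : V = T (fderiv ℝ (fderiv ℝ H) y₀ R))
    (h₁ : iteratedDeriv 1 y 0 = F) (h₂ : iteratedDeriv 2 y 0 = Q)
    (h₃ : iteratedDeriv 3 y 0 = R + (3 / 4 : ℝ) • S)
    (h₄ : iteratedDeriv 4 y 0 = U + (5 / 2 : ℝ) • W + (1 / 2 : ℝ) • V) :
    ∀ k ∈ Finset.Icc 1 4, iteratedDeriv k (H ∘ y) 0 = 0 := by
  have g₁ := iteratedDeriv_one_comp hH hy 0
  have g₂ := iteratedDeriv_two_comp hH hy 0
  have g₃ := iteratedDeriv_three_comp hH hy 0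
  have g₄ := iteratedDeriv_four_comp hH hy 0
  rw [hy₀, h₁] at g₁
  rw [hy₀, h₁, h₂] at g₂
  rw [hy₀, h₁, h₂, h₃] at g₃
  rw [hy₀, h₁, h₂, h₃, h₄] at g₄
  set δ₁ := fderiv ℝ H y₀
  set δ₂ := fderiv ℝ (fderiv ℝ H) y₀
  set δ₃ := fderiv ℝ (fderiv ℝ (fderiv ℝ H)) y₀
  set δ₄ := fderiv ℝ (fderiv ℝ (fderiv ℝ (fderiv ℝ H))) y₀
  have e₁ (M : E →L[ℝ] ℝ) : δ₁ (T M) = -M F := by rw [hT, ← hF]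
  have e₂ (M : E →L[ℝ] ℝ) : δ₂ F (T M) = -M Q := by rw [hT, ← hQ]
  have dF : δ₁ F = 0 := by have := e₁ δ₁; rw [← hF] at this; linarith
  have dQ : δ₁ Q = -δ₂ F F := by rw [hQ, e₁]
  have d₂FQ : δ₂ F Q = 0 := by have := e₂ (δ₂ F); rw [← hQ] at this; linarith
  have dR : δ₁ R = -δ₃ F F F := by rw [hR, e₁]
  have dS : δ₁ S = 0 := by rw [hS, e₁, fderiv_fderiv_comm hH, d₂FQ, neg_zero]
  have d₂FR : δ₂ F R = -δ₃ F F Q := by rw [hR, e₂]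
  have d₂FS : δ₂ F S = -δ₂ Q Q := by rw [hS, e₂]
  have dU : δ₁ U = -δ₄ F F F F := by rw [hU, e₁]
  have dW : δ₁ W = -δ₃ F F Q := by rw [hW, e₁, fderiv_fderiv_fderiv_comm₂₃ hH]
  have dV : δ₁ V = δ₃ F F Q := by rw [hV, e₁, fderiv_fderiv_comm hH, d₂FR, neg_neg]
  intro k hk
  obtain ⟨hk₁, hk₄⟩ := Finset.mem_Icc.1 hk
  interval_cases k
  · rw [g₁, dF]
  · rw [g₂, dQ, add_neg_cancel]
  · rw [g₃, map_add, map_smul, dR, dS, d₂FQ]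
    simp
  · rw [g₄]
    simp only [map_add, map_smul, smul_eq_mul, nsmul_eq_mul, dU, dW, dV, d₂FR, d₂FS]
    ring

end Energy

section RungeKutta

variable {s n : ℕ} (A : Matrix (Fin s) (Fin s) ℝ) (b : Fin s → ℝ)
  (f : (Fin n → ℝ) → Fin n → ℝ) (h : ℝ) (y₀ : Fin n → ℝ)

theorem rkStages_eq (i : Fin s) :
    rkStages A f h y₀ i =
      f (y₀ + h • ∑ j, (if j < i then A i j else 0) • rkStages A f h y₀ j) := by
  rw [rkStages]
  congr 1
  ext m
  simp [Finset.sum_apply, ite_smul, ite_apply]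

theorem rkStep_eq : rkStep A b f h y₀ = y₀ + h • ∑ i, b i • rkStages A f h y₀ i := by
  ext m
  simp [rkStep, Finset.sum_apply]

theorem rkStages_zero_step (i : Fin s) : rkStages A f 0 y₀ i = f y₀ := by
  rw [rkStages_eq, zero_smul, add_zero]

theorem rkStep_zero_step : rkStep A b f 0 y₀ = y₀ := by
  simp [rkStep_eq]

end RungeKutta

noncomputable def pep324A : Matrix (Fin 3) (Fin 3) ℝ := !![0, 0, 0; 1/3, 0, 0; -5/48, 15/16, 0]

noncomputable def pep324b : Fin 3 → ℝ := ![1/10, 1/2, 2/5]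

section PEP324

variable {n : ℕ} {f : (Fin n → ℝ) → Fin n → ℝ} (y₀ : Fin n → ℝ)

theorem pep324_stage_zero (h : ℝ) : rkStages pep324A f h y₀ 0 = f y₀ := by
  rw [rkStages_eq]
  simp

theorem pep324_stage_one (h : ℝ) :
    rkStages pep324A f h y₀ 1 = f (y₀ + h • (1 / 3 : ℝ) • f y₀) := by
  rw [rkStages_eq, Fin.sum_univ_three, pep324_stage_zero]
  simp [pep324A]

theorem pep324_stage_two (h : ℝ) :
    rkStages pep324A f h y₀ 2 = f (y₀ + h • ((-5 / 48 : ℝ) • f y₀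
      + (15 / 16 : ℝ) • rkStages pep324A f h y₀ 1)) := by
  rw [rkStages_eq, Fin.sum_univ_three, pep324_stage_zero]
  simp [pep324A, smul_add]

theorem pep324_step (h : ℝ) :
    rkStep pep324A pep324b f h y₀ = y₀ + h • ((1 / 10 : ℝ) • f y₀
      + (1 / 2 : ℝ) • rkStages pep324A f h y₀ 1 + (2 / 5 : ℝ) • rkStages pep324A f h y₀ 2) := by
  rw [rkStep_eq]
  simp [Fin.sum_univ_three, pep324b, pep324_stage_zero]

theorem contDiff_pep324_stage_one (hf : ContDiff ℝ ∞ f) :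
    ContDiff ℝ ∞ fun h => rkStages pep324A f h y₀ 1 := by
  simp only [pep324_stage_one]
  fun_prop

theorem contDiff_pep324_stage_two (hf : ContDiff ℝ ∞ f) :
    ContDiff ℝ ∞ fun h => rkStages pep324A f h y₀ 2 := by
  have := contDiff_pep324_stage_one y₀ hf
  simp only [pep324_stage_two]
  fun_prop

theorem contDiff_pep324_step (hf : ContDiff ℝ ∞ f) :
    ContDiff ℝ ∞ fun h => rkStep pep324A pep324b f h y₀ := by
  have := contDiff_pep324_stage_one y₀ hf
  have := contDiff_pep324_stage_two y₀ hf
  simp only [pep324_step]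
  fun_prop

end PEP324

section PEP324Taylor

/- The vector field is taken in the form `L ∘ G`, so that for `f = J∇H` all derivatives fall on
`G = DH` and the coefficients below are the elementary differentials of the energy lemma. -/
variable {n : ℕ} {V : Type*} [NormedAddCommGroup V] [NormedSpace ℝ V] {G : (Fin n → ℝ) → V}
  (L : V →L[ℝ] Fin n → ℝ) (y₀ : Fin n → ℝ)

theorem iteratedDeriv_pep324_stage_one (hG : ContDiff ℝ ∞ G) {F Q R U : Fin n → ℝ}
    (hF : F = L (G y₀)) (hQ : Q = L (fderiv ℝ G y₀ F))
    (hR : R = L (fderiv ℝ (fderiv ℝ G) y₀ F F))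
    (hU : U = L (fderiv ℝ (fderiv ℝ (fderiv ℝ G)) y₀ F F F)) :
    iteratedDeriv 1 (fun h => rkStages pep324A (fun y => L (G y)) h y₀ 1) 0 = (1 / 3 : ℝ) • Q ∧
    iteratedDeriv 2 (fun h => rkStages pep324A (fun y => L (G y)) h y₀ 1) 0 = (1 / 9 : ℝ) • R ∧
    iteratedDeriv 3 (fun h => rkStages pep324A (fun y => L (G y)) h y₀ 1) 0
      = (1 / 27 : ℝ) • U := by
  set γ : ℝ → Fin n → ℝ := fun h => y₀ + h • (1 / 3 : ℝ) • F
  have hK : (fun h => rkStages pep324A (fun y => L (G y)) h y₀ 1) = L ∘ (G ∘ γ) := by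
    funext h
    rw [pep324_stage_one, ← hF]
    rfl
  have hγ : ContDiff ℝ ∞ γ := by fun_prop
  have hγ₀ : γ 0 = y₀ := by simp [γ]
  have hγ' (k : ℕ) : iteratedDeriv (k + 1) γ 0 = if k = 0 then (1 / 3 : ℝ) • F else 0 := by
    rw [iteratedDeriv_succ_const_add_id_smul_zero contDiff_const, iteratedDeriv_const]
    split_ifs with hk <;> simp [hk]
  have γ₁ : iteratedDeriv 1 γ 0 = (1 / 3 : ℝ) • F := hγ' 0
  have γ₂ : iteratedDeriv 2 γ 0 = 0 := hγ' 1
  have γ₃ : iteratedDeriv 3 γ 0 = 0 := hγ' 2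
  rw [hK]
  simp only [L.iteratedDeriv_comp_left (hG.comp hγ)]
  refine ⟨?_, ?_, ?_⟩
  · rw [iteratedDeriv_one_comp hG hγ, hγ₀, γ₁, map_smul, map_smul, hQ]
  · rw [iteratedDeriv_two_comp hG hγ, hγ₀, γ₁, γ₂, hR]
    simp [smul_smul]
    norm_num
  · rw [iteratedDeriv_three_comp hG hγ, hγ₀, γ₁, γ₂, γ₃, hU]
    simp [smul_smul]
    norm_num

theorem iteratedDeriv_pep324_stage_two (hG : ContDiff ℝ ∞ G) {F Q R S U W V : Fin n → ℝ}
    (hF : F = L (G y₀)) (hQ : Q = L (fderiv ℝ G y₀ F))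
    (hR : R = L (fderiv ℝ (fderiv ℝ G) y₀ F F)) (hS : S = L (fderiv ℝ G y₀ Q))
    (hU : U = L (fderiv ℝ (fderiv ℝ (fderiv ℝ G)) y₀ F F F))
    (hW : W = L (fderiv ℝ (fderiv ℝ G) y₀ F Q)) (hV : V = L (fderiv ℝ G y₀ R)) :
    iteratedDeriv 1 (fun h => rkStages pep324A (fun y => L (G y)) h y₀ 2) 0 = (5 / 6 : ℝ) • Q ∧
    iteratedDeriv 2 (fun h => rkStages pep324A (fun y => L (G y)) h y₀ 2) 0
      = (25 / 36 : ℝ) • R + (5 / 8 : ℝ) • S ∧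
    iteratedDeriv 3 (fun h => rkStages pep324A (fun y => L (G y)) h y₀ 2) 0
      = (125 / 216 : ℝ) • U + (25 / 16 : ℝ) • W + (5 / 16 : ℝ) • V := by
  obtain ⟨k₁, k₂, -⟩ := iteratedDeriv_pep324_stage_one L y₀ hG hF hQ hR hU
  set K₁ := fun h => rkStages pep324A (fun y => L (G y)) h y₀ 1
  set w : ℝ → Fin n → ℝ := fun h => (-5 / 48 : ℝ) • F + (15 / 16 : ℝ) • K₁ h
  set γ : ℝ → Fin n → ℝ := fun h => y₀ + h • w h
  have hK : (fun h => rkStages pep324A (fun y => L (G y)) h y₀ 2) = L ∘ (G ∘ γ) := by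
    funext h
    rw [pep324_stage_two, ← hF]
    rfl
  have hK₁ : ContDiff ℝ ∞ K₁ := contDiff_pep324_stage_one y₀ (by fun_prop)
  have hw : ContDiff ℝ ∞ w := by fun_prop
  have hγ : ContDiff ℝ ∞ γ := by fun_prop
  have hγ₀ : γ 0 = y₀ := by simp [γ]
  have hw' (k : ℕ) : iteratedDeriv (k + 1) w 0 = (15 / 16 : ℝ) • iteratedDeriv (k + 1) K₁ 0 := by
    rw [iteratedDeriv_const_add k.succ_pos, iteratedDeriv_fun_const_smul_field]
  have γ₁ : iteratedDeriv 1 γ 0 = (5 / 6 : ℝ) • F := by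
    rw [iteratedDeriv_succ_const_add_id_smul_zero hw y₀ 0, iteratedDeriv_zero]
    simp only [w, K₁, rkStages_zero_step, ← hF]
    module
  have γ₂ : iteratedDeriv 2 γ 0 = (5 / 8 : ℝ) • Q := by
    rw [iteratedDeriv_succ_const_add_id_smul_zero hw y₀ 1, hw' 0, k₁]
    module
  have γ₃ : iteratedDeriv 3 γ 0 = (5 / 16 : ℝ) • R := by
    rw [iteratedDeriv_succ_const_add_id_smul_zero hw y₀ 2, hw' 1, k₂]
    module
  rw [hK]
  simp only [L.iteratedDeriv_comp_left (hG.comp hγ)]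
  refine ⟨?_, ?_, ?_⟩
  · rw [iteratedDeriv_one_comp hG hγ, hγ₀, γ₁, map_smul, map_smul, hQ]
  · rw [iteratedDeriv_two_comp hG hγ, hγ₀, γ₁, γ₂, hR, hS]
    simp only [map_smul, map_add, _root_.smul_apply, smul_smul]
    norm_num
  · rw [iteratedDeriv_three_comp hG hγ, hγ₀, γ₁, γ₂, γ₃, hU, hW, hV]
    simp only [map_smul, map_add, map_nsmul, _root_.smul_apply, smul_smul]
    module

theorem iteratedDeriv_pep324_step (hG : ContDiff ℝ ∞ G) {F Q R S U W V : Fin n → ℝ}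
    (hF : F = L (G y₀)) (hQ : Q = L (fderiv ℝ G y₀ F))
    (hR : R = L (fderiv ℝ (fderiv ℝ G) y₀ F F)) (hS : S = L (fderiv ℝ G y₀ Q))
    (hU : U = L (fderiv ℝ (fderiv ℝ (fderiv ℝ G)) y₀ F F F))
    (hW : W = L (fderiv ℝ (fderiv ℝ G) y₀ F Q)) (hV : V = L (fderiv ℝ G y₀ R)) :
    iteratedDeriv 1 (fun h => rkStep pep324A pep324b (fun y => L (G y)) h y₀) 0 = F ∧
    iteratedDeriv 2 (fun h => rkStep pep324A pep324b (fun y => L (G y)) h y₀) 0 = Q ∧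
    iteratedDeriv 3 (fun h => rkStep pep324A pep324b (fun y => L (G y)) h y₀) 0
      = R + (3 / 4 : ℝ) • S ∧
    iteratedDeriv 4 (fun h => rkStep pep324A pep324b (fun y => L (G y)) h y₀) 0
      = U + (5 / 2 : ℝ) • W + (1 / 2 : ℝ) • V := by
  obtain ⟨k₁₁, k₁₂, k₁₃⟩ := iteratedDeriv_pep324_stage_one L y₀ hG hF hQ hR hU
  obtain ⟨k₂₁, k₂₂, k₂₃⟩ := iteratedDeriv_pep324_stage_two L y₀ hG hF hQ hR hS hU hW hV
  set K₁ := fun h => rkStages pep324A (fun y => L (G y)) h y₀ 1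
  set K₂ := fun h => rkStages pep324A (fun y => L (G y)) h y₀ 2
  set v : ℝ → Fin n → ℝ := fun h => (1 / 10 : ℝ) • F + (1 / 2 : ℝ) • K₁ h + (2 / 5 : ℝ) • K₂ h
  have hy : (fun h => rkStep pep324A pep324b (fun y => L (G y)) h y₀)
      = fun h => y₀ + h • v h := by
    funext h
    rw [pep324_step, ← hF]
  have hK₁ : ContDiff ℝ ∞ K₁ := contDiff_pep324_stage_one y₀ (by fun_prop)
  have hK₂ : ContDiff ℝ ∞ K₂ := contDiff_pep324_stage_two y₀ (by fun_prop)
  have hv : ContDiff ℝ ∞ v := by fun_prop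
  have hv' (k : ℕ) : iteratedDeriv (k + 1) v 0
      = (1 / 2 : ℝ) • iteratedDeriv (k + 1) K₁ 0 + (2 / 5 : ℝ) • iteratedDeriv (k + 1) K₂ 0 := by
    have hc {φ : ℝ → Fin n → ℝ} (hφ : ContDiff ℝ ∞ φ) : ContDiffAt ℝ (k + 1 : ℕ) φ 0 :=
      hφ.contDiffAt.of_le (WithTop.coe_le_coe.2 le_top)
    rw [iteratedDeriv_fun_add (hc (by fun_prop)) (hc (by fun_prop)),
      iteratedDeriv_const_add k.succ_pos, iteratedDeriv_fun_const_smul_field,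
      iteratedDeriv_fun_const_smul_field]
  rw [hy]
  refine ⟨?_, ?_, ?_, ?_⟩
  · rw [iteratedDeriv_succ_const_add_id_smul_zero hv y₀ 0, iteratedDeriv_zero]
    simp only [v, K₁, K₂, rkStages_zero_step, ← hF]
    module
  · rw [iteratedDeriv_succ_const_add_id_smul_zero hv y₀ 1, hv' 0, k₁₁, k₂₁]
    module
  · rw [iteratedDeriv_succ_const_add_id_smul_zero hv y₀ 2, hv' 1, k₁₂, k₂₂]
    module
  · rw [iteratedDeriv_succ_const_add_id_smul_zero hv y₀ 3, hv' 2, k₁₃, k₂₃]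
    module

end PEP324Taylor

theorem pep324_method_general (A : Matrix (Fin 3) (Fin 3) ℝ) (b : Fin 3 → ℝ)
    (hA : A = !![0, 0, 0; 1/3, 0, 0; -5/48, 15/16, 0])
    (hb : b = ![1/10, 1/2, 2/5]) :
    ∀ (n : ℕ) (J : Matrix (Fin n) (Fin n) ℝ), Jᵀ = -J →
      ∀ (H : (Fin n → ℝ) → ℝ), ContDiff ℝ (⊤ : ℕ∞) H →
        ∀ y₀ : Fin n → ℝ,
          (fun h => H (rkStep A b (fun y => J.mulVec (grad H y)) h y₀) - H y₀)
            =O[𝓝 (0 : ℝ)] (fun h => h ^ 5) := by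
  rintro n J hJ H hH y₀
  subst hA hb
  simp only [mulVec_grad]
  have hDH := (contDiff_infty_iff_fderiv.1 hH).2
  have hy := contDiff_pep324_step y₀ ((hamiltonianVector J).contDiff.comp hDH)
  obtain ⟨h₁, h₂, h₃, h₄⟩ := iteratedDeriv_pep324_step (hamiltonianVector J) y₀ hDH
    rfl rfl rfl rfl rfl rfl rfl
  have hzero := iteratedDeriv_energy_eq_zero (apply_hamiltonianVector hJ) hH hy
    (rkStep_zero_step _ _ _ y₀) rfl rfl rfl rfl rfl rfl rfl h₁ h₂ h₃ h₄
  have hO := sub_isBigO_pow_of_iteratedDeriv_eq_zero (n := 4)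
    ((hH.comp hy).of_le (by exact_mod_cast ENat.LEInfty.out)) hzero
  simp only [Function.comp_apply, rkStep_zero_step, sub_zero, Nat.reduceAdd] at hO
  exact hO

/-- The three-stage explicit Runge--Kutta method with `a₂₁ = 1/3`, `a₃₁ = −5/48`,
`a₃₂ = 15/16`, `c = (0, 1/3, 5/6)`, `b = (1/10, 1/2, 2/5)` has
pseudo-energy-preserving order at least 4: the energy error after one step is
`O(h⁵)` for every Hamiltonian system. -/
theorem pep324_method (A : Matrix (Fin 3) (Fin 3) ℝ) (b c : Fin 3 → ℝ)
    (hA : A = !![0, 0, 0; 1/3, 0, 0; -5/48, 15/16, 0])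
    (hb : b = ![1/10, 1/2, 2/5]) (hc : c = ![0, 1/3, 5/6]) :
    ∀ (n : ℕ) (J : Matrix (Fin n) (Fin n) ℝ), Jᵀ = -J →
      ∀ (H : (Fin n → ℝ) → ℝ), ContDiff ℝ (⊤ : ℕ∞) H →
        ∀ y₀ : Fin n → ℝ,
          (fun h => H (rkStep A b (fun y => J.mulVec (grad H y)) h y₀) - H y₀)
            =O[𝓝 (0 : ℝ)] (fun h => h ^ 5) :=
  pep324_method_general A b hA hb
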